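/- arXiv:2505.11759 — 2 statements merged into one kernel-verified Lean document; each statement's English description precedes it below -/
import Mathlib

section
/- Among all PMFs on a finite constellation C ⊂ ℝ with entropy at least R (where R ≤ log|C|), the Maxwell–Boltzmann distribution P_λ(a) = e^{-λ a²}/∑_{a'∈C} e^{-λ a'²} with λ ≥ 0 chosen so that H(P_λ) = R minimizes the average energy ∑_a P(a) a². -/
open Finset Real

lemma gibbs_pt {p q : ℝ} (hp : 0 ≤ p) (hq : 0 < q) :
    p * Real.log q - p * Real.log p ≤ q - p := by
  rcases hp.lt_or_eq with hp | hp
  · have h1 : Real.log (q / p) ≤ q / p - 1 := Real.log_le_sub_one_of_pos (div_pos hq hp)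
    have h2 : p * Real.log (q / p) ≤ p * (q / p - 1) := by
      exact mul_le_mul_of_nonneg_left h1 hp.le
    rw [Real.log_div hq.ne' hp.ne'] at h2
    have : p * (q / p - 1) = q - p := by field_simp
    nlinarith
  · simp [← hp]; positivity

lemma gibbs_pt_strict {p q : ℝ} (hp : 0 ≤ p) (hq : 0 < q) (hne : p ≠ q) :
    p * Real.log q - p * Real.log p < q - p := by
  rcases hp.lt_or_eq with hp | hp
  · have hqp : q / p ≠ 1 := by
      intro h; exact hne ((div_eq_one_iff_eq hp.ne').mp h).symm
    have h1 : Real.log (q / p) < q / p - 1 :=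
      Real.log_lt_sub_one_of_pos (div_pos hq hp) hqp
    have h2 : p * Real.log (q / p) < p * (q / p - 1) :=
      (mul_lt_mul_iff_right₀ hp).mpr h1
    rw [Real.log_div hq.ne' hp.ne'] at h2
    have : p * (q / p - 1) = q - p := by field_simp
    nlinarith
  · simp [← hp]; linarith [hq, hp]

theorem maxwellBoltzmann_minimizes_energy
    (C : Finset ℝ) (hC : ∃ a ∈ C, ∃ b ∈ C, a ^ 2 ≠ b ^ 2)
    (R : ℝ) (hR : R ≤ Real.log C.card)
    (lam : ℝ) (hlam : 0 ≤ lam)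
    (Plam : ℝ → ℝ)
    (hPlam : ∀ a, Plam a = Real.exp (-lam * a ^ 2) / ∑ a' ∈ C, Real.exp (-lam * a' ^ 2))
    (hrate : (-∑ a ∈ C, Plam a * Real.log (Plam a)) = R)
    (P : ℝ → ℝ) (hP0 : ∀ a ∈ C, 0 ≤ P a) (hP1 : ∑ a ∈ C, P a = 1)
    (hH : R ≤ -∑ a ∈ C, P a * Real.log (P a)) :
    ∑ a ∈ C, Plam a * a ^ 2 ≤ ∑ a ∈ C, P a * a ^ 2 := by
  obtain ⟨a₀, ha₀, -⟩ := hC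
  have hCne : C.Nonempty := ⟨a₀, ha₀⟩
  set Z : ℝ := ∑ a' ∈ C, Real.exp (-lam * a' ^ 2) with hZ
  have hZpos : 0 < Z := Finset.sum_pos (fun a _ => Real.exp_pos _) hCne
  have hPlampos : ∀ a ∈ C, 0 < Plam a := by
    intro a _; rw [hPlam]; exact div_pos (Real.exp_pos _) hZpos
  have hPlamsum : ∑ a ∈ C, Plam a = 1 := by
    simp only [hPlam]; rw [← Finset.sum_div, div_self hZpos.ne']
  have hlog : ∀ a, Real.log (Plam a) = -lam * a ^ 2 - Real.log Z := by
    intro a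
    rw [hPlam, Real.log_div (Real.exp_ne_zero _) hZpos.ne', Real.log_exp]
  -- general Gibbs: ∑ P log Plam - ∑ P log P ≤ 0
  have hGibbs : ∑ a ∈ C, (P a * Real.log (Plam a) - P a * Real.log (P a)) ≤ 0 := by
    calc ∑ a ∈ C, (P a * Real.log (Plam a) - P a * Real.log (P a))
        ≤ ∑ a ∈ C, (Plam a - P a) :=
          Finset.sum_le_sum fun a ha => gibbs_pt (hP0 a ha) (hPlampos a ha)
      _ = 0 := by rw [Finset.sum_sub_distrib, hPlamsum, hP1, sub_self]
  -- compute R = lam * ∑ Plam a² + log Z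
  have hRcomp : R = lam * (∑ a ∈ C, Plam a * a ^ 2) + Real.log Z := by
    rw [← hrate]
    have : ∀ a ∈ C, Plam a * Real.log (Plam a)
        = -(lam * (Plam a * a ^ 2)) - Real.log Z * Plam a := by
      intro a _; rw [hlog]; ring
    rw [Finset.sum_congr rfl this, Finset.sum_sub_distrib, Finset.sum_neg_distrib,
      ← Finset.mul_sum, ← Finset.mul_sum, hPlamsum]
    ring
  -- -∑ P log Plam = lam * ∑ P a² + log Z
  have hcross : ∑ a ∈ C, P a * Real.log (Plam a)
      = -(lam * (∑ a ∈ C, P a * a ^ 2) + Real.log Z) := by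
    have : ∀ a ∈ C, P a * Real.log (Plam a)
        = -(lam * (P a * a ^ 2)) - Real.log Z * P a := by
      intro a _; rw [hlog]; ring
    rw [Finset.sum_congr rfl this, Finset.sum_sub_distrib, Finset.sum_neg_distrib,
      ← Finset.mul_sum, ← Finset.mul_sum, hP1]
    ring
  have key : lam * (∑ a ∈ C, Plam a * a ^ 2) ≤ lam * (∑ a ∈ C, P a * a ^ 2) := by
    rw [Finset.sum_sub_distrib, hcross] at hGibbs
    linarith [hH, hRcomp]
  rcases hlam.lt_or_eq with hlam' | hlam'
  · exact le_of_mul_le_mul_left key hlam'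
  -- lam = 0 : Plam is uniform and equality forces P uniform
  · have hHle : ∑ a ∈ C, (P a * Real.log (Plam a) - P a * Real.log (P a)) ≥ 0 := by
      rw [Finset.sum_sub_distrib, hcross, ← hlam']
      simp only [zero_mul, zero_add]
      linarith [hH, hRcomp, hlam'.symm ▸ hRcomp]
    have hEq : ∀ a ∈ C, P a = Plam a := by
      by_contra h
      push_neg at h
      obtain ⟨b, hb, hbne⟩ := h
      have hlt : ∑ a ∈ C, (P a * Real.log (Plam a) - P a * Real.log (P a))
          < ∑ a ∈ C, (Plam a - P a) :=
        Finset.sum_lt_sum (fun a ha => gibbs_pt (hP0 a ha) (hPlampos a ha))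
          ⟨b, hb, gibbs_pt_strict (hP0 b hb) (hPlampos b hb) hbne⟩
      rw [Finset.sum_sub_distrib] at hHle hlt
      have hRHS : ∑ a ∈ C, (Plam a - P a) = 0 := by
        rw [Finset.sum_sub_distrib, hPlamsum, hP1, sub_self]
      linarith
    have : ∑ a ∈ C, Plam a * a ^ 2 = ∑ a ∈ C, P a * a ^ 2 :=
      Finset.sum_congr rfl fun a ha => by rw [hEq a ha]
    exact this.le
end

section
/- If P and Q are PMFs on a finite set with H(P) ≥ H(Q) and Q(a) = e^{-λ f(a)}/Z for some λ ≥ 0 and Z = ∑ e^{-λ f(a)}, then ∑_a P(a) f(a) ≥ ∑_a Q(a) f(a). -/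
open Finset Real

theorem gibbs_minimizes_energy {A : Type*} [Fintype A] [Nonempty A]
    (f : A → ℝ) (lam : ℝ) (hlam : 0 ≤ lam)
    (Z : ℝ) (hZ : Z = ∑ a : A, Real.exp (-lam * f a))
    (Q : A → ℝ) (hQ : ∀ a, Q a = Real.exp (-lam * f a) / Z)
    (P : A → ℝ) (hP0 : ∀ a, 0 ≤ P a) (hP1 : ∑ a : A, P a = 1)
    (hH : (-∑ a : A, Q a * Real.log (Q a)) ≤ -∑ a : A, P a * Real.log (P a)) :
    ∑ a : A, Q a * f a ≤ ∑ a : A, P a * f a := by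
  have hZpos : 0 < Z := by
    rw [hZ]; exact Finset.sum_pos (fun a _ => Real.exp_pos _) Finset.univ_nonempty
  have hQpos : ∀ a, 0 < Q a := fun a => by
    rw [hQ]; exact div_pos (Real.exp_pos _) hZpos
  have hQsum : ∑ a : A, Q a = 1 := by
    simp only [hQ, ← Finset.sum_div, ← hZ]
    exact div_self hZpos.ne'
  have hlogQ : ∀ a, Real.log (Q a) = -lam * f a - Real.log Z := fun a => by
    rw [hQ, Real.log_div (Real.exp_ne_zero _) hZpos.ne', Real.log_exp]
  have hterm : ∀ a : A, P a * Real.log (Q a) - P a * Real.log (P a) ≤ Q a - P a := by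
    intro a
    rcases (hP0 a).eq_or_lt with h | h
    · simp [← h]
      exact (hQpos a).le
    · have hd := Real.log_le_sub_one_of_pos (div_pos (hQpos a) h)
      rw [Real.log_div (hQpos a).ne' h.ne'] at hd
      have h2 : P a * (Q a / P a - 1) = Q a - P a := by field_simp
      nlinarith
  have hsum : ∑ a : A, (P a * Real.log (Q a) - P a * Real.log (P a)) ≤
      ∑ a : A, (Q a - P a) := Finset.sum_le_sum (fun a _ => hterm a)
  have hsumQP : ∑ a : A, (Q a - P a) = 0 := by
    rw [Finset.sum_sub_distrib, hQsum, hP1]; ring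
  have hgibbs : ∑ a : A, P a * Real.log (Q a) ≤ ∑ a : A, P a * Real.log (P a) := by
    rw [hsumQP, Finset.sum_sub_distrib] at hsum; linarith
  have e1 : ∑ a : A, P a * Real.log (Q a) = -lam * (∑ a : A, P a * f a) - Real.log Z := by
    simp_rw [hlogQ]
    have : ∀ a : A, P a * (-lam * f a - Real.log Z) = -lam * (P a * f a) - Real.log Z * P a := by
      intro a; ring
    simp_rw [this, Finset.sum_sub_distrib, ← Finset.mul_sum, hP1]; ring
  have e2 : ∑ a : A, Q a * Real.log (Q a) = -lam * (∑ a : A, Q a * f a) - Real.log Z := by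
    simp_rw [hlogQ]
    have : ∀ a : A, Q a * (-lam * f a - Real.log Z) = -lam * (Q a * f a) - Real.log Z * Q a := by
      intro a; ring
    simp_rw [this, Finset.sum_sub_distrib, ← Finset.mul_sum, hQsum]; ring
  have hH' : ∑ a : A, P a * Real.log (P a) ≤ ∑ a : A, Q a * Real.log (Q a) := by linarith
  rcases hlam.eq_or_lt with hl0 | hlpos
  · -- lam = 0 : entropy is maximal, so P = Q
    subst hl0
    have hPlogP : ∑ a : A, P a * Real.log (P a) = -Real.log Z := by
      rw [e2] at hH'
      rw [e1] at hgibbs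
      simp only [neg_zero, zero_mul] at hH' hgibbs
      linarith
    have heq0 : ∑ a : A, (P a * Real.log (Q a) - P a * Real.log (P a)) =
        ∑ a : A, (Q a - P a) := by
      rw [hsumQP, Finset.sum_sub_distrib, e1, hPlogP]
      simp
    have hall := (Finset.sum_eq_sum_iff_of_le (fun a _ => hterm a)).mp heq0
    have hPQ : ∀ a : A, Q a = P a := by
      intro a
      have ha := (hall a (Finset.mem_univ a)).symm
      rcases (hP0 a).eq_or_lt with h | h
      · exfalso
        rw [← h] at ha
        simp at ha
        exact (hQpos a).ne' ha
      · by_contra hne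
        have hne' : Q a / P a ≠ 1 := by
          intro hc
          exact hne (by field_simp at hc; linarith)
        have hd := Real.log_lt_sub_one_of_pos (div_pos (hQpos a) h) hne'
        rw [Real.log_div (hQpos a).ne' h.ne'] at hd
        have h2 : P a * (Q a / P a - 1) = Q a - P a := by field_simp
        nlinarith
    refine le_of_eq (Finset.sum_congr rfl (fun a _ => by rw [hPQ a]))
  · -- lam > 0
    rw [e1] at hgibbs
    rw [e2] at hH'
    have : lam * (∑ a : A, Q a * f a) ≤ lam * (∑ a : A, P a * f a) := by linarith
    exact le_of_mul_le_mul_left this hlpos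
end
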